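/- arXiv:1804.00203 — 8 statements merged into one kernel-verified Lean document; each statement's English description precedes it below -/
import Mathlib

section
/- Let Φ and Ψ be frames in H and U ∈ B(H). Then U is compact if and only if G_{U,Φ,Ψ} = T_Φ* U T_Ψ is compact on ℓ². -/
/-! Since `T*` is bounded below, the frame operator `S = T T*` is coercive, hence invertible by
Lax–Milgram; so `S⁻¹ T` is a continuous left inverse of `T*` and `T* S⁻¹` a continuous right
inverse of `T`, and `U = (S_Φ⁻¹ T_Φ) G (T_Ψ* S_Ψ⁻¹)` is compact whenever `G = T_Φ* U T_Ψ` is. -/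

open ContinuousLinearMap

noncomputable section

/-- ℓ² over a countable index set. -/
abbrev L2 : Type := lp (fun _ : ℕ => ℂ) 2

theorem isCompactOperator_comp_iff_of_inverses {R : Type*} [Semiring R]
    {M₁ M₂ M₃ M₄ : Type*} [TopologicalSpace M₁] [TopologicalSpace M₂] [TopologicalSpace M₃]
    [TopologicalSpace M₄] [AddCommMonoid M₁] [AddCommMonoid M₂] [AddCommMonoid M₃]
    [AddCommMonoid M₄] [Module R M₁] [Module R M₂] [Module R M₃] [Module R M₄]
    {L : M₃ →L[R] M₄} {U : M₂ →L[R] M₃} {P : M₁ →L[R] M₂}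
    (hL : ∃ L' : M₄ →L[R] M₃, L' ∘L L = .id R M₃) (hP : ∃ P' : M₂ →L[R] M₁, P ∘L P' = .id R M₂) :
    IsCompactOperator (L ∘L U ∘L P) ↔ IsCompactOperator U := by
  refine ⟨fun h ↦ ?_, fun h ↦ (h.comp_clm P).clm_comp L⟩
  obtain ⟨L', hL'⟩ := hL
  obtain ⟨P', hP'⟩ := hP
  have hU : L' ∘L (L ∘L U ∘L P) ∘L P' = U := by
    rw [← comp_assoc, ← comp_assoc, hL', id_comp, comp_assoc, hP', comp_id]
  rw [← hU]
  exact (h.comp_clm P').clm_comp L'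

namespace ContinuousLinearMap

variable {𝕜 E F : Type*} [RCLike 𝕜] [NormedAddCommGroup E] [InnerProductSpace 𝕜 E]
  [CompleteSpace E] [NormedAddCommGroup F] [InnerProductSpace 𝕜 F] [CompleteSpace F]
  {T : E →L[𝕜] F} {A : ℝ}

theorem isUnit_comp_adjoint_of_bounded_below (hA : 0 < A)
    (h : ∀ f, A * ‖f‖ ^ 2 ≤ ‖adjoint T f‖ ^ 2) :
    IsUnit (T ∘L adjoint T) := by
  refine isUnit_of_forall_le_norm_inner_map _ (c := ⟨A, hA.le⟩) hA fun f ↦ ?_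
  calc ‖f‖ ^ 2 * A ≤ ‖adjoint T f‖ ^ 2 := by linarith [h f]
    _ = RCLike.re (inner 𝕜 ((T ∘L adjoint T) f) f) := by
      rw [apply_norm_sq_eq_inner_adjoint_left, adjoint_adjoint]
    _ ≤ _ := RCLike.re_le_norm _

theorem exists_leftInverse_adjoint_of_bounded_below (hA : 0 < A)
    (h : ∀ f, A * ‖f‖ ^ 2 ≤ ‖adjoint T f‖ ^ 2) :
    ∃ L : E →L[𝕜] F, L ∘L adjoint T = .id 𝕜 F := by
  obtain ⟨u, hu⟩ := isUnit_comp_adjoint_of_bounded_below hA h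
  exact ⟨↑u⁻¹ ∘L T, by rw [comp_assoc, ← hu]; exact u.inv_mul⟩

theorem exists_rightInverse_of_adjoint_bounded_below (hA : 0 < A)
    (h : ∀ f, A * ‖f‖ ^ 2 ≤ ‖adjoint T f‖ ^ 2) :
    ∃ R : F →L[𝕜] E, T ∘L R = .id 𝕜 F := by
  obtain ⟨u, hu⟩ := isUnit_comp_adjoint_of_bounded_below hA h
  exact ⟨adjoint T ∘L ↑u⁻¹, by rw [← comp_assoc, ← hu]; exact u.mul_inv⟩

end ContinuousLinearMap

theorem stmt_8_general
    {H : Type} [NormedAddCommGroup H] [InnerProductSpace ℂ H] [CompleteSpace H]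
    (AΦ AΨ : ℝ) (hAΦ : 0 < AΦ) (hAΨ : 0 < AΨ)
    (TΦ TΨ : L2 →L[ℂ] H)
    (hlowΦ : ∀ f : H, AΦ * ‖f‖ ^ 2 ≤ ‖adjoint TΦ f‖ ^ 2)
    (hlowΨ : ∀ f : H, AΨ * ‖f‖ ^ 2 ≤ ‖adjoint TΨ f‖ ^ 2)
    (U : H →L[ℂ] H) :
    IsCompactOperator ⇑U ↔ IsCompactOperator ⇑(adjoint TΦ ∘L U ∘L TΨ) :=
  (isCompactOperator_comp_iff_of_inverses
    (exists_leftInverse_adjoint_of_bounded_below hAΦ hlowΦ)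
    (exists_rightInverse_of_adjoint_bounded_below hAΨ hlowΨ)).symm

/-- for frames `Φ, Ψ` in `H` and `U` bounded, `U` is compact iff
`G_{U,Φ,Ψ} = TΦ* U TΨ` is compact on ℓ². -/
theorem stmt_8
    {H : Type} [NormedAddCommGroup H] [InnerProductSpace ℂ H] [CompleteSpace H]
    (Φ Ψ : ℕ → H) (AΦ AΨ : ℝ) (hAΦ : 0 < AΦ) (hAΨ : 0 < AΨ)
    (TΦ TΨ : L2 →L[ℂ] H)
    (hΦ : ∀ i, TΦ (lp.single 2 i 1) = Φ i)
    (hΨ : ∀ i, TΨ (lp.single 2 i 1) = Ψ i)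
    (hlowΦ : ∀ f : H, AΦ * ‖f‖ ^ 2 ≤ ‖adjoint TΦ f‖ ^ 2)
    (hlowΨ : ∀ f : H, AΨ * ‖f‖ ^ 2 ≤ ‖adjoint TΨ f‖ ^ 2)
    (U : H →L[ℂ] H) :
    IsCompactOperator ⇑U ↔ IsCompactOperator ⇑(adjoint TΦ ∘L U ∘L TΨ) :=
  stmt_8_general AΦ AΨ hAΦ hAΨ TΦ TΨ hlowΦ hlowΨ U
end
end

section
/- Let U ∈ B(H), and Φ, Ψ frames in H. If the U-cross Gram matrix G_{U,Φ,Ψ} equals the identity on ℓ², then Φ and Ψ are Riesz bases, Φ̃ = UΨ (i.e. Φ = S_Φ U Ψ), Ψ = S_Ψ U* Φ, and U = T_{Φ̃} T_{Ψ̃}* is invertible. Conversely, if these hold, G_{U,Φ,Ψ} = I. -/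
open ContinuousLinearMap

noncomputable section

/-!
A lower frame bound `A‖f‖² ≤ ‖T* f‖²` says that the frame operator `T T*` dominates `A • 1` in
the Loewner order, so it is invertible in the C⋆-algebra `B(H)`: `T` is onto and `T*` is
one-to-one. If `G = T_Φ* U T_Ψ = 1`, then `G` and `G* = T_Ψ* U* T_Φ` exhibit left inverses of
`T_Ψ` and `T_Φ`, so both synthesis operators are bijective; `U` is bijective because `T_Ψ` is
onto and `T_Φ*` one-to-one, and the formulas for `Φ`, `Ψ` and `S_Φ U S_Ψ` are `G = 1`
multiplied by `T_Φ` on the left and by `T_Ψ*` on the right. Conversely,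
`T_Φ G T_Ψ* = T_Φ T_Ψ*` can be cancelled because `T_Φ` is injective and `T_Ψ*` is onto.
-/

namespace ContinuousLinearMap

section CrossGram

variable {𝕜 E F G : Type*} [RCLike 𝕜]
  [NormedAddCommGroup E] [InnerProductSpace 𝕜 E] [CompleteSpace E]
  [NormedAddCommGroup F] [InnerProductSpace 𝕜 F]
  [NormedAddCommGroup G] [InnerProductSpace 𝕜 G] [CompleteSpace G]

def frameOperator [CompleteSpace F] (T : E →L[𝕜] F) : F →L[𝕜] F :=
  T ∘L adjoint T

/-- The `U`-cross Gram operator `G_{U,Φ,Ψ} = T_Φ* U T_Ψ`, with matrix `⟨U ψ_j, φ_i⟩`. -/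
def crossGram (S : E →L[𝕜] G) (U : F →L[𝕜] G) (T : E →L[𝕜] F) : E →L[𝕜] E :=
  adjoint S ∘L U ∘L T

variable {S : E →L[𝕜] G} {T : E →L[𝕜] F} {U : F →L[𝕜] G}

lemma surjective_adjoint_of_bijective [CompleteSpace F] (hT : Function.Bijective T) :
    Function.Surjective (adjoint T) := by
  let e := ContinuousLinearEquiv.ofBijective T (LinearMap.ker_eq_bot.mpr hT.1)
    (LinearMap.range_eq_top.mpr hT.2)
  have hinv : adjoint T ∘L adjoint (e.symm : F →L[𝕜] E) = ContinuousLinearMap.id 𝕜 E := by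
    rw [← adjoint_comp, ← adjoint_id]
    congr 1
    ext z
    exact e.symm_apply_apply z
  exact fun z => ⟨adjoint (e.symm : F →L[𝕜] E) z, DFunLike.congr_fun hinv z⟩

lemma crossGram_adjoint_eq_id [CompleteSpace F] (hG : crossGram S U T = .id 𝕜 E) :
    crossGram T (adjoint U) S = .id 𝕜 E := by
  simpa [crossGram, adjoint_comp, comp_assoc, adjoint_id] using congrArg adjoint hG

lemma injective_of_crossGram_eq_id (hG : crossGram S U T = .id 𝕜 E) : Function.Injective T :=
  Function.LeftInverse.injective (g := adjoint S ∘ U) (DFunLike.congr_fun hG)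

lemma frameOperator_apply_of_crossGram_eq_id (hG : crossGram S U T = .id 𝕜 E) (z : E) :
    frameOperator S (U (T z)) = S z :=
  congrArg S (DFunLike.congr_fun hG z)

lemma bijective_of_crossGram_eq_id (hG : crossGram S U T = .id 𝕜 E)
    (hS : Function.Injective (adjoint S)) (hT : Function.Surjective T) :
    Function.Bijective U :=
  ⟨(Function.LeftInverse.injective (g := adjoint S) (f := U ∘ T)
      (DFunLike.congr_fun hG)).of_comp_right hT,
    (Function.RightInverse.surjective (g := T) (f := adjoint S ∘ U)
      (DFunLike.congr_fun hG)).of_comp_left hS⟩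

lemma frameOperator_comp_comp_frameOperator_of_crossGram_eq_id [CompleteSpace F]
    (hG : crossGram S U T = .id 𝕜 E) :
    frameOperator S ∘L U ∘L frameOperator T = S ∘L adjoint T := by
  calc frameOperator S ∘L U ∘L frameOperator T = S ∘L crossGram S U T ∘L adjoint T := by
        simp only [frameOperator, crossGram, comp_assoc]
    _ = S ∘L adjoint T := by rw [hG, id_comp]

lemma crossGram_eq_id_of_frameOperator_comp_comp_frameOperator [CompleteSpace F]
    (hS : Function.Injective S) (hT : Function.Surjective (adjoint T))
    (h : frameOperator S ∘L U ∘L frameOperator T = S ∘L adjoint T) :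
    crossGram S U T = .id 𝕜 E := by
  ext1 z
  obtain ⟨w, rfl⟩ := hT z
  exact hS (DFunLike.congr_fun h w)

end CrossGram

section LowerFrameBound

variable {E H : Type*} [NormedAddCommGroup E] [InnerProductSpace ℂ E] [CompleteSpace E]
  [NormedAddCommGroup H] [InnerProductSpace ℂ H] [CompleteSpace H]
  {T : E →L[ℂ] H} {A : ℝ}

lemma algebraMap_le_frameOperator (hlow : ∀ f, A * ‖f‖ ^ 2 ≤ ‖adjoint T f‖ ^ 2) :
    algebraMap ℝ (H →L[ℂ] H) A ≤ frameOperator T := by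
  rw [le_def, isPositive_def']
  refine ⟨(isPositive_self_comp_adjoint T).isSelfAdjoint.sub (.algebraMap _ (.all A)),
    fun f => ?_⟩
  simp only [frameOperator, reApplyInnerSelf_apply, sub_apply, inner_sub_left, map_sub,
    sub_nonneg, Algebra.algebraMap_eq_smul_one, smul_apply, comp_apply]
  calc RCLike.re (inner ℂ (A • f) f) = A * ‖f‖ ^ 2 := by
        rw [← inner_self_eq_norm_sq (𝕜 := ℂ), RCLike.real_smul_eq_coe_smul (K := ℂ) A f,
          inner_smul_real_left]
        simp
    _ ≤ ‖adjoint T f‖ ^ 2 := hlow f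
    _ = RCLike.re (inner ℂ (T (adjoint T f)) f) := by
        simpa using apply_norm_sq_eq_inner_adjoint_left (adjoint T) f

lemma bijective_frameOperator (hA : 0 < A) (hlow : ∀ f, A * ‖f‖ ^ 2 ≤ ‖adjoint T f‖ ^ 2) :
    Function.Bijective (frameOperator T) :=
  isUnit_iff_bijective.mp <| CStarAlgebra.isUnit_of_le _ (algebraMap_le_frameOperator hlow)
    (isStrictlyPositive_algebraMap hA)

lemma surjective_of_lower_bound (hA : 0 < A) (hlow : ∀ f, A * ‖f‖ ^ 2 ≤ ‖adjoint T f‖ ^ 2) :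
    Function.Surjective T :=
  Function.Surjective.of_comp (g := adjoint T) (bijective_frameOperator hA hlow).2

lemma injective_adjoint_of_lower_bound (hA : 0 < A)
    (hlow : ∀ f, A * ‖f‖ ^ 2 ≤ ‖adjoint T f‖ ^ 2) : Function.Injective (adjoint T) :=
  (self_comp_adjoint_injective_iff T).mp (bijective_frameOperator hA hlow).1

end LowerFrameBound

end ContinuousLinearMap

/-- for frames `Φ, Ψ`, `G_{U,Φ,Ψ} = I` iff `Φ, Ψ` are Riesz bases
(synthesis operators bijective), `Φ = S_Φ U Ψ`, `Ψ = S_Ψ U* Φ`, `U` is invertible and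
`U = T_{Φ̃} T_{Ψ̃}*` (equivalently `S_Φ U S_Ψ = TΦ TΨ*`). -/
theorem stmt_10
    {H : Type} [NormedAddCommGroup H] [InnerProductSpace ℂ H] [CompleteSpace H]
    (Φ Ψ : ℕ → H) (AΦ AΨ : ℝ) (hAΦ : 0 < AΦ) (hAΨ : 0 < AΨ)
    (TΦ TΨ : L2 →L[ℂ] H)
    (hΦ : ∀ i, TΦ (lp.single 2 i 1) = Φ i)
    (hΨ : ∀ i, TΨ (lp.single 2 i 1) = Ψ i)
    (hlowΦ : ∀ f : H, AΦ * ‖f‖ ^ 2 ≤ ‖adjoint TΦ f‖ ^ 2)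
    (hlowΨ : ∀ f : H, AΨ * ‖f‖ ^ 2 ≤ ‖adjoint TΨ f‖ ^ 2)
    (U : H →L[ℂ] H) :
    (adjoint TΦ ∘L U ∘L TΨ = ContinuousLinearMap.id ℂ L2) ↔
      (Function.Bijective ⇑TΦ ∧ Function.Bijective ⇑TΨ ∧
        (∀ i, Φ i = (TΦ ∘L adjoint TΦ) (U (Ψ i))) ∧
        (∀ i, Ψ i = (TΨ ∘L adjoint TΨ) (adjoint U (Φ i))) ∧
        Function.Bijective ⇑U ∧
        (TΦ ∘L adjoint TΦ) ∘L U ∘L (TΨ ∘L adjoint TΨ) = TΦ ∘L adjoint TΨ) := by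
  constructor
  · intro hG
    have hG' := crossGram_adjoint_eq_id hG
    have hTΦ : Function.Bijective TΦ :=
      ⟨injective_of_crossGram_eq_id hG', surjective_of_lower_bound hAΦ hlowΦ⟩
    have hTΨ : Function.Bijective TΨ :=
      ⟨injective_of_crossGram_eq_id hG, surjective_of_lower_bound hAΨ hlowΨ⟩
    refine ⟨hTΦ, hTΨ, fun i => ?_, fun i => ?_,
      bijective_of_crossGram_eq_id hG (injective_adjoint_of_lower_bound hAΦ hlowΦ) hTΨ.2,
      frameOperator_comp_comp_frameOperator_of_crossGram_eq_id hG⟩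
    · rw [← hΦ, ← hΨ]
      exact (frameOperator_apply_of_crossGram_eq_id hG _).symm
    · rw [← hΦ, ← hΨ]
      exact (frameOperator_apply_of_crossGram_eq_id hG' _).symm
  · rintro ⟨hTΦ, hTΨ, -, -, -, h⟩
    exact crossGram_eq_id_of_frameOperator_comp_comp_frameOperator hTΦ.1
      (surjective_adjoint_of_bijective hTΨ) h
end
end

section
/- Let Φ be a frame in H with dual frame Φ^d and U ∈ B(H). If G_{U,Φ,Φ^d} = I on ℓ², then U = I_H and Φ^d is the canonical dual of Φ (and Φ is a Riesz basis). -/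
open ContinuousLinearMap

noncomputable section

/-- if `Φ^d` is a dual of the frame `Φ` and `G_{U,Φ,Φ^d} = I`, then
`U = I`, `Φ^d` is the canonical dual `S_Φ⁻¹ Φ`, and `Φ` is a Riesz basis. -/
theorem stmt_11
    {H : Type} [NormedAddCommGroup H] [InnerProductSpace ℂ H] [CompleteSpace H]
    (Φ Φd : ℕ → H) (AΦ : ℝ) (hAΦ : 0 < AΦ)
    (TΦ TΦd : L2 →L[ℂ] H)
    (hΦ : ∀ i, TΦ (lp.single 2 i 1) = Φ i)
    (hΦd : ∀ i, TΦd (lp.single 2 i 1) = Φd i)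
    (hlowΦ : ∀ f : H, AΦ * ‖f‖ ^ 2 ≤ ‖adjoint TΦ f‖ ^ 2)
    (hdual : TΦ ∘L adjoint TΦd = ContinuousLinearMap.id ℂ H)
    (U : H →L[ℂ] H)
    (hG : adjoint TΦ ∘L U ∘L TΦd = ContinuousLinearMap.id ℂ L2) :
    U = ContinuousLinearMap.id ℂ H ∧
      (∀ i, (TΦ ∘L adjoint TΦ) (Φd i) = Φ i) ∧
      Function.Bijective ⇑TΦ := by
  have hinj : Function.Injective (adjoint TΦ) := by
    intro x y hxy
    have h0 : adjoint TΦ (x - y) = 0 := by rw [map_sub, hxy, sub_self]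
    have hle := hlowΦ (x - y)
    rw [h0, norm_zero] at hle
    have hn : ‖x - y‖ = 0 := by
      by_contra hne
      have hpos : 0 < ‖x - y‖ := lt_of_le_of_ne (norm_nonneg _) (Ne.symm hne)
      nlinarith [mul_pos hAΦ (mul_pos hpos hpos)]
    exact sub_eq_zero.mp (norm_eq_zero.mp hn)
  -- adjoint of hdual : TΦd ∘L adjoint TΦ = id
  have h1 : TΦd ∘L adjoint TΦ = ContinuousLinearMap.id ℂ H := by
    have := congrArg ContinuousLinearMap.adjoint hdual
    simpa [adjoint_comp, adjoint_adjoint, adjoint_id] using this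
  have h1' : ∀ h : H, TΦd (adjoint TΦ h) = h := fun h => by
    have := ContinuousLinearMap.ext_iff.mp h1 h
    simpa using this
  have hUeq : ∀ h : H, U h = h := by
    intro h
    apply hinj
    have hg := ContinuousLinearMap.ext_iff.mp hG (adjoint TΦ h)
    simp only [ContinuousLinearMap.comp_apply, ContinuousLinearMap.id_apply] at hg
    rw [h1' h] at hg
    exact hg
  have hUid : U = ContinuousLinearMap.id ℂ H :=
    ContinuousLinearMap.ext fun h => by simp [hUeq h]
  have hG' : ∀ x : L2, adjoint TΦ (TΦd x) = x := by
    intro x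
    have := ContinuousLinearMap.ext_iff.mp hG x
    simpa [ContinuousLinearMap.comp_apply, hUeq] using this
  refine ⟨hUid, ?_, ?_, ?_⟩
  · intro i
    rw [← hΦd i, ← hΦ i]
    simp [ContinuousLinearMap.comp_apply, hG']
  · -- injective: x = adjoint TΦd (TΦ x)
    have h2 : adjoint TΦd ∘L TΦ = ContinuousLinearMap.id ℂ L2 := by
      have hGid : adjoint TΦ ∘L TΦd = ContinuousLinearMap.id ℂ L2 :=
        ContinuousLinearMap.ext fun x => by simpa using hG' x
      have := congrArg ContinuousLinearMap.adjoint hGid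
      simpa [adjoint_comp, adjoint_adjoint, adjoint_id] using this
    intro x y hxy
    have hx := ContinuousLinearMap.ext_iff.mp h2 x
    have hy := ContinuousLinearMap.ext_iff.mp h2 y
    simp only [ContinuousLinearMap.comp_apply, ContinuousLinearMap.id_apply] at hx hy
    rw [← hx, ← hy, hxy]
  · intro h
    refine ⟨adjoint TΦd h, ?_⟩
    have := ContinuousLinearMap.ext_iff.mp hdual h
    simpa using this
end
end

section
/- Let U ∈ B(H₁,H₂) and Φ, Ψ be Bessel sequences in H₂ and H₁ respectively such that G_{U,Φ,Ψ} = T_Φ* U T_Ψ is invertible on ℓ². Then Φ and Ψ are Riesz sequences, i.e., there exist constants A, B > 0 with A Σ|c_i|² ≤ ‖Σ c_i φ_i‖² ≤ B Σ|c_i|² for all finite scalar sequences (and similarly for Ψ). In particular, T_Φ and T_Ψ are bounded below: ‖T_Φ d‖ ≥ ‖d‖ / (√(B_Ψ) ‖G_{U,Φ,Ψ}^{-1}‖ ‖U‖). -/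
/-! Invertibility of `G = TΦ† U TΨ` exhibits bounded left inverses `Ginv TΦ† U` of `TΨ` and
`Ginv† TΨ† U†` of `TΦ` (the latter by taking adjoints in `G Ginv = 1`). An operator with a bounded
left inverse `S` is bounded below by `‖x‖ ≤ ‖S‖ ‖T x‖`, which together with its own boundedness
gives the Riesz bounds. -/

open ContinuousLinearMap

noncomputable section

/-- The two-sided norm equivalence that makes the images `T eᵢ` a Riesz sequence when `T` is a
synthesis operator. -/
def HasRieszBounds {𝕜 E F : Type*} [NontriviallyNormedField 𝕜] [SeminormedAddCommGroup E]
    [NormedSpace 𝕜 E] [SeminormedAddCommGroup F] [NormedSpace 𝕜 F] (T : E →L[𝕜] F) : Prop :=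
  ∃ A > (0 : ℝ), ∃ B > (0 : ℝ), ∀ c : E, A * ‖c‖ ^ 2 ≤ ‖T c‖ ^ 2 ∧ ‖T c‖ ^ 2 ≤ B * ‖c‖ ^ 2

section LeftInverse

variable {𝕜 E F : Type*} [NontriviallyNormedField 𝕜] [SeminormedAddCommGroup E]
  [NormedSpace 𝕜 E] [SeminormedAddCommGroup F] [NormedSpace 𝕜 F]

theorem ContinuousLinearMap.norm_le_opNorm_mul_of_comp_eq_id {S : F →L[𝕜] E} {T : E →L[𝕜] F}
    (h : S ∘L T = ContinuousLinearMap.id 𝕜 E) (x : E) : ‖x‖ ≤ ‖S‖ * ‖T x‖ :=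
  calc ‖x‖ = ‖S (T x)‖ := by rw [← comp_apply, h, id_apply]
    _ ≤ ‖S‖ * ‖T x‖ := le_opNorm S (T x)

theorem HasRieszBounds.of_norm_le_mul_norm {T : E →L[𝕜] F} {C : ℝ}
    (hC : ∀ x, ‖x‖ ≤ C * ‖T x‖) : HasRieszBounds T := by
  refine ⟨(max C 1 ^ 2)⁻¹, by positivity, ‖T‖ ^ 2 + 1, by positivity, fun c => ⟨?_, ?_⟩⟩
  · have hc : ‖c‖ ≤ max C 1 * ‖T c‖ :=
      (hC c).trans (mul_le_mul_of_nonneg_right (le_max_left C 1) (norm_nonneg _))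
    rw [inv_mul_le_iff₀ (by positivity), ← mul_pow]
    exact pow_le_pow_left₀ (norm_nonneg c) hc 2
  · calc ‖T c‖ ^ 2 ≤ (‖T‖ * ‖c‖) ^ 2 := pow_le_pow_left₀ (norm_nonneg _) (le_opNorm T c) 2
      _ ≤ (‖T‖ ^ 2 + 1) * ‖c‖ ^ 2 := by nlinarith [sq_nonneg ‖c‖]

theorem HasRieszBounds.of_comp_eq_id {S : F →L[𝕜] E} {T : E →L[𝕜] F}
    (h : S ∘L T = ContinuousLinearMap.id 𝕜 E) : HasRieszBounds T :=
  .of_norm_le_mul_norm (norm_le_opNorm_mul_of_comp_eq_id h)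

end LeftInverse

theorem stmt_12_general
    {H1 H2 : Type} [NormedAddCommGroup H1] [InnerProductSpace ℂ H1] [CompleteSpace H1]
    [NormedAddCommGroup H2] [InnerProductSpace ℂ H2] [CompleteSpace H2]
    (BΨ : ℝ)
    (TΦ : L2 →L[ℂ] H2) (TΨ : L2 →L[ℂ] H1)
    (hBΨ : ‖TΨ‖ ≤ Real.sqrt BΨ)
    (U : H1 →L[ℂ] H2)
    (Ginv : L2 →L[ℂ] L2)
    (hGinv1 : (adjoint TΦ ∘L U ∘L TΨ) ∘L Ginv = ContinuousLinearMap.id ℂ L2)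
    (hGinv2 : Ginv ∘L (adjoint TΦ ∘L U ∘L TΨ) = ContinuousLinearMap.id ℂ L2) :
    (∃ A > (0 : ℝ), ∃ B > (0 : ℝ), ∀ c : L2,
        A * ‖c‖ ^ 2 ≤ ‖TΦ c‖ ^ 2 ∧ ‖TΦ c‖ ^ 2 ≤ B * ‖c‖ ^ 2) ∧
    (∃ A > (0 : ℝ), ∃ B > (0 : ℝ), ∀ c : L2,
        A * ‖c‖ ^ 2 ≤ ‖TΨ c‖ ^ 2 ∧ ‖TΨ c‖ ^ 2 ≤ B * ‖c‖ ^ 2) ∧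
    (∀ d : L2, ‖d‖ ≤ Real.sqrt BΨ * ‖Ginv‖ * ‖U‖ * ‖TΦ d‖) := by
  have hΦ_left :
      (adjoint Ginv ∘L adjoint TΨ ∘L adjoint U) ∘L TΦ = ContinuousLinearMap.id ℂ L2 := by
    simpa only [adjoint_comp, adjoint_id, adjoint_adjoint, comp_assoc] using
      congrArg adjoint hGinv1
  have hΨ_left : (Ginv ∘L adjoint TΦ ∘L U) ∘L TΨ = ContinuousLinearMap.id ℂ L2 := by
    simpa only [comp_assoc] using hGinv2
  have hnorm : ‖adjoint Ginv ∘L adjoint TΨ ∘L adjoint U‖ ≤ Real.sqrt BΨ * ‖Ginv‖ * ‖U‖ :=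
    calc _ ≤ ‖adjoint Ginv‖ * (‖adjoint TΨ‖ * ‖adjoint U‖) :=
          (opNorm_comp_le _ _).trans (by gcongr; exact opNorm_comp_le _ _)
      _ = ‖TΨ‖ * ‖Ginv‖ * ‖U‖ := by simp only [adjoint.norm_map]; ring
      _ ≤ Real.sqrt BΨ * ‖Ginv‖ * ‖U‖ := by gcongr
  have hΦ_below (d : L2) : ‖d‖ ≤ Real.sqrt BΨ * ‖Ginv‖ * ‖U‖ * ‖TΦ d‖ :=
    (norm_le_opNorm_mul_of_comp_eq_id hΦ_left d).trans (by gcongr)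
  exact ⟨HasRieszBounds.of_norm_le_mul_norm hΦ_below, HasRieszBounds.of_comp_eq_id hΨ_left,
    hΦ_below⟩

/-- if `G_{U,Φ,Ψ}` is invertible (two-sided inverse `Ginv`) for Bessel
sequences `Φ, Ψ` (Bessel bounds `BΦ, BΨ`), then `Φ` and `Ψ` are Riesz sequences, and
`‖TΦ d‖ ≥ ‖d‖ / (√BΨ ‖Ginv‖ ‖U‖)`. -/
theorem stmt_12
    {H1 H2 : Type} [NormedAddCommGroup H1] [InnerProductSpace ℂ H1] [CompleteSpace H1]
    [NormedAddCommGroup H2] [InnerProductSpace ℂ H2] [CompleteSpace H2]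
    (Φ : ℕ → H2) (Ψ : ℕ → H1) (BΦ BΨ : ℝ)
    (TΦ : L2 →L[ℂ] H2) (TΨ : L2 →L[ℂ] H1)
    (hΦ : ∀ i, TΦ (lp.single 2 i 1) = Φ i)
    (hΨ : ∀ i, TΨ (lp.single 2 i 1) = Ψ i)
    (hBΦ : ‖TΦ‖ ≤ Real.sqrt BΦ) (hBΨ : ‖TΨ‖ ≤ Real.sqrt BΨ)
    (U : H1 →L[ℂ] H2)
    (Ginv : L2 →L[ℂ] L2)
    (hGinv1 : (adjoint TΦ ∘L U ∘L TΨ) ∘L Ginv = ContinuousLinearMap.id ℂ L2)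
    (hGinv2 : Ginv ∘L (adjoint TΦ ∘L U ∘L TΨ) = ContinuousLinearMap.id ℂ L2) :
    (∃ A > (0 : ℝ), ∃ B > (0 : ℝ), ∀ c : L2,
        A * ‖c‖ ^ 2 ≤ ‖TΦ c‖ ^ 2 ∧ ‖TΦ c‖ ^ 2 ≤ B * ‖c‖ ^ 2) ∧
    (∃ A > (0 : ℝ), ∃ B > (0 : ℝ), ∀ c : L2,
        A * ‖c‖ ^ 2 ≤ ‖TΨ c‖ ^ 2 ∧ ‖TΨ c‖ ^ 2 ≤ B * ‖c‖ ^ 2) ∧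
    (∀ d : L2, ‖d‖ ≤ Real.sqrt BΨ * ‖Ginv‖ * ‖U‖ * ‖TΦ d‖) :=
  stmt_12_general BΨ TΦ TΨ hBΨ U Ginv hGinv1 hGinv2
end
end

section
/- Let U ∈ B(H₁,H₂), Φ and Ψ be Bessel sequences in H₂ and H₁. If G_{U,Φ,Ψ} has a bounded right inverse on ℓ², then Φ and U*Φ are Riesz sequences. If moreover Φ is complete (upper semi-frame), then Φ is a Riesz basis and UΨ is a frame for H₂. -/
/-!
Every claimed lower bound comes from a bounded left inverse. Taking adjoints in
`T_Φ* (U T_Ψ R) = I` and `(T_Φ* U) (T_Ψ R) = I` exhibits bounded left inverses of `T_Φ` and of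
`U* T_Φ`. A left inverse also makes the range of `T_Φ` closed, so when that range is dense, `T_Φ`
is bijective; then the left inverse `R* (U T_Ψ)*` of `T_Φ` is also a right inverse, and hence
`T_Φ R*` is a left inverse of `(U T_Ψ)*`, which is the frame inequality for `U Ψ`.
-/

open ContinuousLinearMap Function

noncomputable section

theorem exists_pos_mul_sq_norm_le_of_leftInverse {𝕜 E F : Type*} [NontriviallyNormedField 𝕜]
    [SeminormedAddCommGroup E] [NormedSpace 𝕜 E] [SeminormedAddCommGroup F] [NormedSpace 𝕜 F]
    {L : F →L[𝕜] E} {A : E → F} (h : LeftInverse L A) :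
    ∃ a > (0 : ℝ), ∀ x, a * ‖x‖ ^ 2 ≤ ‖A x‖ ^ 2 := by
  refine ⟨((‖L‖ + 1) ^ 2)⁻¹, by positivity, fun x => ?_⟩
  have hx : ‖x‖ ≤ (‖L‖ + 1) * ‖A x‖ := calc
    ‖x‖ = ‖L (A x)‖ := by rw [h x]
    _ ≤ ‖L‖ * ‖A x‖ := L.le_opNorm _
    _ ≤ (‖L‖ + 1) * ‖A x‖ := by gcongr; linarith
  rw [inv_mul_le_iff₀ (by positivity), ← mul_pow]
  exact pow_le_pow_left₀ (norm_nonneg _) hx 2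

theorem leftInverse_adjoint_of_comp_eq_id {𝕜 E F : Type*} [RCLike 𝕜]
    [NormedAddCommGroup E] [InnerProductSpace 𝕜 E] [CompleteSpace E]
    [NormedAddCommGroup F] [InnerProductSpace 𝕜 F] [CompleteSpace F]
    {A : F →L[𝕜] E} {B : E →L[𝕜] F} (h : A ∘L B = ContinuousLinearMap.id 𝕜 E) :
    LeftInverse (adjoint B) (adjoint A) := fun x => by
  simpa [adjoint_comp, adjoint_id] using congr($(congrArg adjoint h) x)

theorem stmt_14_general
    {H1 H2 : Type} [NormedAddCommGroup H1] [InnerProductSpace ℂ H1] [CompleteSpace H1]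
    [NormedAddCommGroup H2] [InnerProductSpace ℂ H2] [CompleteSpace H2]
    (TΦ : L2 →L[ℂ] H2) (TΨ : L2 →L[ℂ] H1)
    (U : H1 →L[ℂ] H2)
    (R : L2 →L[ℂ] L2)
    (hR : (adjoint TΦ ∘L U ∘L TΨ) ∘L R = ContinuousLinearMap.id ℂ L2) :
    (∃ A > (0 : ℝ), ∀ c : L2, A * ‖c‖ ^ 2 ≤ ‖TΦ c‖ ^ 2) ∧
    (∃ A > (0 : ℝ), ∀ c : L2, A * ‖c‖ ^ 2 ≤ ‖(adjoint U ∘L TΦ) c‖ ^ 2) ∧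
    (DenseRange ⇑TΦ →
      Function.Bijective ⇑TΦ ∧
        ∃ A > (0 : ℝ), ∀ f : H2, A * ‖f‖ ^ 2 ≤ ‖adjoint (U ∘L TΨ) f‖ ^ 2) := by
  have hΦ : LeftInverse (adjoint (U ∘L TΨ ∘L R)) TΦ := by
    simpa using leftInverse_adjoint_of_comp_eq_id (A := adjoint TΦ) (B := U ∘L TΨ ∘L R) hR
  have hUΦ : LeftInverse (adjoint (TΨ ∘L R)) (adjoint U ∘L TΦ) := by
    simpa [adjoint_comp] using
      leftInverse_adjoint_of_comp_eq_id (A := adjoint TΦ ∘L U) (B := TΨ ∘L R) hR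
  refine ⟨exists_pos_mul_sq_norm_le_of_leftInverse hΦ,
    exists_pos_mul_sq_norm_le_of_leftInverse hUΦ, fun hdense => ?_⟩
  have hsurj : Surjective TΦ := by
    rw [← Set.range_eq_univ, ← (hΦ.isClosed_range (map_continuous _) TΦ.continuous).closure_eq]
    exact hdense.closure_range
  have hUΨ : LeftInverse (TΦ ∘L adjoint R) (adjoint (U ∘L TΨ)) := by
    have h : LeftInverse (adjoint R ∘L adjoint (U ∘L TΨ)) TΦ := fun c => by
      simpa [adjoint_comp] using
        leftInverse_adjoint_of_comp_eq_id (A := adjoint TΦ ∘L U ∘L TΨ) (B := R) hR c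
    exact h.rightInverse_of_surjective hsurj
  exact ⟨⟨hΦ.injective, hsurj⟩, exists_pos_mul_sq_norm_le_of_leftInverse hUΨ⟩

/-- if `G_{U,Φ,Ψ}` has a bounded right inverse, then `Φ` and `U*Φ` are
Riesz sequences; if moreover `Φ` is complete (upper semi-frame), then `Φ` is a Riesz
basis and `UΨ` is a frame for `H₂`. -/
theorem stmt_14
    {H1 H2 : Type} [NormedAddCommGroup H1] [InnerProductSpace ℂ H1] [CompleteSpace H1]
    [NormedAddCommGroup H2] [InnerProductSpace ℂ H2] [CompleteSpace H2]
    (Φ : ℕ → H2) (Ψ : ℕ → H1)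
    (TΦ : L2 →L[ℂ] H2) (TΨ : L2 →L[ℂ] H1)
    (hΦ : ∀ i, TΦ (lp.single 2 i 1) = Φ i)
    (hΨ : ∀ i, TΨ (lp.single 2 i 1) = Ψ i)
    (U : H1 →L[ℂ] H2)
    (R : L2 →L[ℂ] L2)
    (hR : (adjoint TΦ ∘L U ∘L TΨ) ∘L R = ContinuousLinearMap.id ℂ L2) :
    (∃ A > (0 : ℝ), ∀ c : L2, A * ‖c‖ ^ 2 ≤ ‖TΦ c‖ ^ 2) ∧
    (∃ A > (0 : ℝ), ∀ c : L2, A * ‖c‖ ^ 2 ≤ ‖(adjoint U ∘L TΦ) c‖ ^ 2) ∧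
    (DenseRange ⇑TΦ →
      Function.Bijective ⇑TΦ ∧
        ∃ A > (0 : ℝ), ∀ f : H2, A * ‖f‖ ^ 2 ≤ ‖adjoint (U ∘L TΨ) f‖ ^ 2) :=
  stmt_14_general TΦ TΨ U R hR
end
end

section
/- Let U ∈ B(H) have closed range, Φ a Bessel sequence and Ψ a frame for H. Then the U-cross Gram matrix G_{U,Φ,Ψ} has closed range in ℓ² if and only if U*Φ = {U*φ_i} is a frame sequence (a frame for its closed span). -/
open ContinuousLinearMap

noncomputable section

/-!
The frame `Ψ` has a synthesis operator `TΨ` whose adjoint is bounded below, so `TΨ TΨ†` is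
coercive, hence invertible, and `TΨ` is onto. The Gram operator `TΦ† U TΨ` therefore has the same
range as `D = TΦ† U = (U† TΦ)†`. The `i`-th coordinate of `D f` is `⟪U† Φ i, f⟫`, so `ker D` is
the orthogonal complement of the span of `U† Φ`, and the closed span is `(ker D)ᗮ`. Finally, `D`
has closed range iff its injective restriction to `(ker D)ᗮ` is bounded below (open mapping
theorem), which is the lower frame bound; the upper one is just the boundedness of `D`.
-/

namespace ContinuousLinearMap

variable {𝕜 E F : Type*} [RCLike 𝕜]

theorem exists_pos_mul_sq_le_iff_antilipschitz [SeminormedAddCommGroup E]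
    [SeminormedAddCommGroup F] [Module 𝕜 E] [Module 𝕜 F] (f : E →L[𝕜] F) :
    (∃ A > (0 : ℝ), ∀ x, A * ‖x‖ ^ 2 ≤ ‖f x‖ ^ 2) ↔ ∃ K, AntilipschitzWith K f := by
  constructor
  · rintro ⟨A, hA, h⟩
    refine ⟨(√A)⁻¹.toNNReal, f.antilipschitz_of_bound fun x => ?_⟩
    have hsqrt : √A * ‖x‖ ≤ ‖f x‖ := by
      rw [← pow_le_pow_iff_left₀ (by positivity) (norm_nonneg _) two_ne_zero, mul_pow,
        Real.sq_sqrt hA.le]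
      exact h x
    rw [Real.coe_toNNReal _ (by positivity), inv_mul_eq_div, le_div_iff₀ (by positivity)]
    linarith
  · rintro ⟨K, hK⟩
    refine ⟨((K + 1) ^ 2)⁻¹, by positivity, fun x => ?_⟩
    have hx : ‖x‖ ≤ (K + 1) * ‖f x‖ :=
      (f.bound_of_antilipschitz hK x).trans (by gcongr; linarith)
    rw [inv_mul_le_iff₀ (by positivity), ← mul_pow]
    exact pow_le_pow_left₀ (norm_nonneg _) hx 2

theorem exists_pos_sq_norm_apply_le [SeminormedAddCommGroup E]
    [SeminormedAddCommGroup F] [NormedSpace 𝕜 E] [NormedSpace 𝕜 F] (f : E →L[𝕜] F) :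
    ∃ B > (0 : ℝ), ∀ x, ‖f x‖ ^ 2 ≤ B * ‖x‖ ^ 2 :=
  ⟨‖f‖ ^ 2 + 1, by positivity, fun x => by
    nlinarith [f.le_opNorm x, norm_nonneg (f x), norm_nonneg x, norm_nonneg f]⟩

variable [NormedAddCommGroup E] [InnerProductSpace 𝕜 E] [CompleteSpace E]
  [NormedAddCommGroup F] [InnerProductSpace 𝕜 F] [CompleteSpace F]

theorem surjective_of_mul_sq_le_norm_adjoint_apply {T : E →L[𝕜] F} {c : ℝ} (hc : 0 < c)
    (h : ∀ y, c * ‖y‖ ^ 2 ≤ ‖adjoint T y‖ ^ 2) : Function.Surjective T := by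
  have hunit : IsUnit (T ∘L adjoint T) :=
    isUnit_of_forall_le_norm_inner_map _ (c := c.toNNReal) (by simpa using hc) fun y => by
      rw [comp_apply, ← adjoint_inner_right, inner_self_eq_norm_sq_to_K,
        Real.coe_toNNReal _ hc.le, mul_comm, ← RCLike.ofReal_pow,
        RCLike.norm_of_nonneg (by positivity)]
      exact h y
  intro y
  obtain ⟨x, hx⟩ := (isUnit_iff_bijective.mp hunit).surjective y
  exact ⟨adjoint T x, hx⟩

theorem adjoint_apply_apply_eq_inner_single {ι : Type*} [DecidableEq ι]
    (T : lp (fun _ : ι => 𝕜) 2 →L[𝕜] E) (x : E) (i : ι) :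
    adjoint T x i = inner 𝕜 (T (lp.single 2 i 1)) x := by
  rw [← adjoint_inner_right, lp.inner_single_left, RCLike.inner_apply, map_one, mul_one]

theorem ker_adjoint_eq_orthogonal_span_single {ι : Type*} [DecidableEq ι]
    (T : lp (fun _ : ι => 𝕜) 2 →L[𝕜] E) :
    (adjoint T).ker = (Submodule.span 𝕜 (Set.range fun i => T (lp.single 2 i 1)))ᗮ := by
  ext x
  rw [LinearMap.mem_ker, ← Submodule.span_singleton_le_iff_mem, ← Submodule.isOrtho_iff_le,
    Submodule.isOrtho_comm, Submodule.isOrtho_span]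
  simp only [coe_coe, Set.forall_mem_range, Set.mem_singleton_iff, forall_eq,
    ← adjoint_apply_apply_eq_inner_single]
  exact ⟨fun h i => by simp [h], fun h => lp.ext (funext h)⟩

theorem isClosed_range_iff_exists_pos_mul_sq_le_on_orthogonal_ker (D : E →L[𝕜] F) :
    IsClosed (D.range : Set F) ↔ ∃ A > (0 : ℝ), ∀ x ∈ D.kerᗮ, A * ‖x‖ ^ 2 ≤ ‖D x‖ ^ 2 := by
  have : CompleteSpace D.kerᗮ := D.ker.isClosed_orthogonal.completeSpace_coe
  set R := D ∘L D.kerᗮ.subtypeL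
  have hR_inj : Function.Injective R := by
    rw [← coe_coe, ← LinearMap.ker_eq_bot, Submodule.eq_bot_iff]
    rintro ⟨x, hx⟩ hRx
    exact Subtype.ext <| D.ker.inf_orthogonal_eq_bot.le ⟨hRx, hx⟩
  have hR_range : Set.range R = D.range := by
    rw [LinearMap.coe_range, coe_coe]
    refine Set.Subset.antisymm (fun _ ⟨x, hx⟩ => ⟨x, hx⟩) ?_
    rintro _ ⟨x, rfl⟩
    have hP : D (D.ker.starProjection x) = 0 := D.ker.starProjection_apply_mem x
    exact ⟨⟨_, D.ker.sub_starProjection_mem_orthogonal x⟩, by simp [R, hP]⟩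
  rw [← hR_range, isClosed_range_iff_antilipschitz_of_injective R hR_inj,
    ← exists_pos_mul_sq_le_iff_antilipschitz]
  simp [R]

end ContinuousLinearMap

theorem stmt_16_general
    {H : Type} [NormedAddCommGroup H] [InnerProductSpace ℂ H] [CompleteSpace H]
    (Φ : ℕ → H) (AΨ : ℝ) (hAΨ : 0 < AΨ)
    (TΦ TΨ : L2 →L[ℂ] H)
    (hΦ : ∀ i, TΦ (lp.single 2 i 1) = Φ i)
    (hlowΨ : ∀ f : H, AΨ * ‖f‖ ^ 2 ≤ ‖adjoint TΨ f‖ ^ 2)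
    (U : H →L[ℂ] H) :
    IsClosed (LinearMap.range (adjoint TΦ ∘L U ∘L TΨ : L2 →ₗ[ℂ] L2) : Set L2) ↔
      ∃ A > (0 : ℝ), ∃ B > (0 : ℝ),
        ∀ f ∈ (Submodule.span ℂ
            (Set.range fun i => adjoint U (Φ i))).topologicalClosure,
          A * ‖f‖ ^ 2 ≤ ‖adjoint (adjoint U ∘L TΦ) f‖ ^ 2 ∧
            ‖adjoint (adjoint U ∘L TΦ) f‖ ^ 2 ≤ B * ‖f‖ ^ 2 := by
  set T := adjoint U ∘L TΦ
  have hTΨ_range : (TΨ : L2 →ₗ[ℂ] H).range = ⊤ :=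
    LinearMap.range_eq_top.mpr (surjective_of_mul_sq_le_norm_adjoint_apply hAΨ hlowΨ)
  have hG_range : (adjoint TΦ ∘L U ∘L TΨ).range = (adjoint T).range := by
    rw [adjoint_comp, adjoint_adjoint, ← comp_assoc, toLinearMap_comp]
    exact LinearMap.range_comp_of_range_eq_top _ hTΨ_range
  have hspan : (Submodule.span ℂ (Set.range fun i => adjoint U (Φ i))).topologicalClosure =
      (adjoint T).kerᗮ := by
    simp only [ker_adjoint_eq_orthogonal_span_single, T, comp_apply, hΦ,
      Submodule.orthogonal_orthogonal_eq_closure]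
  obtain ⟨B, hB, hupper⟩ := (adjoint T).exists_pos_sq_norm_apply_le
  rw [hG_range, hspan, isClosed_range_iff_exists_pos_mul_sq_le_on_orthogonal_ker]
  constructor
  · rintro ⟨A, hA, hlower⟩
    exact ⟨A, hA, B, hB, fun f hf => ⟨hlower f hf, hupper f⟩⟩
  · rintro ⟨A, hA, _, _, hframe⟩
    exact ⟨A, hA, fun f hf => (hframe f hf).1⟩

/-- for `U` with closed range, `Φ` Bessel and `Ψ` a frame for `H`,
the Gram matrix `G_{U,Φ,Ψ}` has closed range in ℓ² iff `U*Φ` is a frame sequence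
(a frame for the closure of its span). -/
theorem stmt_16
    {H : Type} [NormedAddCommGroup H] [InnerProductSpace ℂ H] [CompleteSpace H]
    (Φ Ψ : ℕ → H) (AΨ : ℝ) (hAΨ : 0 < AΨ)
    (TΦ TΨ : L2 →L[ℂ] H)
    (hΦ : ∀ i, TΦ (lp.single 2 i 1) = Φ i)
    (hΨ : ∀ i, TΨ (lp.single 2 i 1) = Ψ i)
    (hlowΨ : ∀ f : H, AΨ * ‖f‖ ^ 2 ≤ ‖adjoint TΨ f‖ ^ 2)
    (U : H →L[ℂ] H)
    (hclosed : IsClosed (LinearMap.range (U : H →ₗ[ℂ] H) : Set H)) :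
    IsClosed (LinearMap.range (adjoint TΦ ∘L U ∘L TΨ : L2 →ₗ[ℂ] L2) : Set L2) ↔
      ∃ A > (0 : ℝ), ∃ B > (0 : ℝ),
        ∀ f ∈ (Submodule.span ℂ
            (Set.range fun i => adjoint U (Φ i))).topologicalClosure,
          A * ‖f‖ ^ 2 ≤ ‖adjoint (adjoint U ∘L TΦ) f‖ ^ 2 ∧
            ‖adjoint (adjoint U ∘L TΦ) f‖ ^ 2 ≤ B * ‖f‖ ^ 2 :=
  stmt_16_general Φ AΨ hAΨ TΦ TΨ hΦ hlowΨ U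
end
end

section
/- Let Φ and Ψ be frames in H with dual frames Φ^d and Ψ^d. If ‖I_{ℓ²} − G_{Ψ,Φ}‖ < 1/√(B_Φ B_{Φ^d}), then Φ and Ψ are approximate dual frames, i.e., ‖I_H − T_Φ T_Ψ*‖ < 1. -/
open ContinuousLinearMap

noncomputable section

/-- if `Φ, Ψ` are frames with duals `Φ^d, Ψ^d`, Bessel bounds
`BΦ, BΦd`, and `‖I − G_{Ψ,Φ}‖ < 1/√(BΦ BΦd)`, then `Φ` and `Ψ` are approximately
dual frames: `‖I_H − TΦ TΨ*‖ < 1`. -/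
theorem stmt_18
    {H : Type} [NormedAddCommGroup H] [InnerProductSpace ℂ H] [CompleteSpace H]
    (Φ Ψ Φd Ψd : ℕ → H) (BΦ BΦd : ℝ) (hBΦ : 0 < BΦ) (hBΦd : 0 < BΦd)
    (TΦ TΨ TΦd TΨd : L2 →L[ℂ] H)
    (hΦ : ∀ i, TΦ (lp.single 2 i 1) = Φ i)
    (hΨ : ∀ i, TΨ (lp.single 2 i 1) = Ψ i)
    (hΦd : ∀ i, TΦd (lp.single 2 i 1) = Φd i)
    (hΨd : ∀ i, TΨd (lp.single 2 i 1) = Ψd i)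
    (hnBΦ : ‖TΦ‖ ≤ Real.sqrt BΦ) (hnBΦd : ‖TΦd‖ ≤ Real.sqrt BΦd)
    (hdualΦ : TΦ ∘L adjoint TΦd = ContinuousLinearMap.id ℂ H)
    (hdualΨ : TΨ ∘L adjoint TΨd = ContinuousLinearMap.id ℂ H)
    (hsmall : ‖ContinuousLinearMap.id ℂ L2 - adjoint TΨ ∘L TΦ‖
        < 1 / Real.sqrt (BΦ * BΦd)) :
    ‖ContinuousLinearMap.id ℂ H - TΦ ∘L adjoint TΨ‖ < 1 := by
  set G := ContinuousLinearMap.id ℂ L2 - adjoint TΨ ∘L TΦ with hG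
  have key : ContinuousLinearMap.id ℂ H - TΦ ∘L adjoint TΨ
      = TΦ ∘L G ∘L adjoint TΦd := by
    ext x
    simp only [hG, ContinuousLinearMap.coe_comp', Function.comp_apply,
      ContinuousLinearMap.sub_apply, ContinuousLinearMap.id_apply, map_sub]
    have h1 : TΦ (adjoint TΦd x) = x := congrFun (congrArg DFunLike.coe hdualΦ) x
    rw [h1]
  have hadj : ‖adjoint TΦd‖ = ‖TΦd‖ := (ContinuousLinearMap.adjoint : (L2 →L[ℂ] H) ≃ₗᵢ⋆[ℂ] (H →L[ℂ] L2)).norm_map TΦd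
  have hsq : Real.sqrt (BΦ * BΦd) = Real.sqrt BΦ * Real.sqrt BΦd := Real.sqrt_mul hBΦ.le _
  have hpos : (0:ℝ) < Real.sqrt BΦ * Real.sqrt BΦd := by positivity
  rw [key]
  calc ‖TΦ ∘L G ∘L adjoint TΦd‖
      ≤ ‖TΦ‖ * (‖G‖ * ‖adjoint TΦd‖) :=
        le_trans (ContinuousLinearMap.opNorm_comp_le _ _)
          (by gcongr; exact ContinuousLinearMap.opNorm_comp_le _ _)
    _ ≤ Real.sqrt BΦ * (‖G‖ * Real.sqrt BΦd) := by
        have h2 : ‖adjoint TΦd‖ ≤ Real.sqrt BΦd := by rw [hadj]; exact hnBΦd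
        exact mul_le_mul hnBΦ (mul_le_mul_of_nonneg_left h2 (norm_nonneg G))
          (by positivity) (Real.sqrt_nonneg _)
    _ = (Real.sqrt BΦ * Real.sqrt BΦd) * ‖G‖ := by ring
    _ < (Real.sqrt BΦ * Real.sqrt BΦd) * (1 / Real.sqrt (BΦ * BΦd)) := by
        apply mul_lt_mul_of_pos_left _ hpos
        exact hsmall
    _ = 1 := by
        rw [hsq]; field_simp
end
end

section
/- Let Φ and Ψ be frames in H, U ∈ B(H), and suppose G_{U,Φ,Ψ} is invertible on ℓ². If V ∈ B(H) satisfies ‖U − V‖ < 1/(‖G_{U,Φ,Ψ}^{-1}‖ √(B_Φ B_Ψ)), then G_{V,Φ,Ψ} is also invertible on ℓ². -/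
open ContinuousLinearMap

noncomputable section

set_option maxHeartbeats 1000000 in
set_option synthInstance.maxHeartbeats 200000 in
/-- if `G_{U,Φ,Ψ}` is invertible (inverse `Ginv`) and
`‖U − V‖ < 1/(‖Ginv‖ √(BΦ BΨ))`, then `G_{V,Φ,Ψ}` is invertible as well. -/
theorem stmt_19
    {H : Type} [NormedAddCommGroup H] [InnerProductSpace ℂ H] [CompleteSpace H]
    (Φ Ψ : ℕ → H) (AΦ AΨ BΦ BΨ : ℝ) (hAΦ : 0 < AΦ) (hAΨ : 0 < AΨ)
    (TΦ TΨ : L2 →L[ℂ] H)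
    (hΦ : ∀ i, TΦ (lp.single 2 i 1) = Φ i)
    (hΨ : ∀ i, TΨ (lp.single 2 i 1) = Ψ i)
    (hBΦ : ‖TΦ‖ ≤ Real.sqrt BΦ) (hBΨ : ‖TΨ‖ ≤ Real.sqrt BΨ)
    (hlowΦ : ∀ f : H, AΦ * ‖f‖ ^ 2 ≤ ‖adjoint TΦ f‖ ^ 2)
    (hlowΨ : ∀ f : H, AΨ * ‖f‖ ^ 2 ≤ ‖adjoint TΨ f‖ ^ 2)
    (U V : H →L[ℂ] H)
    (Ginv : L2 →L[ℂ] L2)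
    (hGinv1 : (adjoint TΦ ∘L U ∘L TΨ) ∘L Ginv = ContinuousLinearMap.id ℂ L2)
    (hGinv2 : Ginv ∘L (adjoint TΦ ∘L U ∘L TΨ) = ContinuousLinearMap.id ℂ L2)
    (hsmall : ‖U - V‖ < 1 / (‖Ginv‖ * Real.sqrt (BΦ * BΨ))) :
    ∃ Gvinv : L2 →L[ℂ] L2,
      (adjoint TΦ ∘L V ∘L TΨ) ∘L Gvinv = ContinuousLinearMap.id ℂ L2 ∧
      Gvinv ∘L (adjoint TΦ ∘L V ∘L TΨ) = ContinuousLinearMap.id ℂ L2 := by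
  set G := adjoint TΦ ∘L U ∘L TΨ with hG
  set G' := adjoint TΦ ∘L V ∘L TΨ with hG'
  -- L2 is nontrivial, so id ≠ 0 and Ginv ≠ 0, TΦ ≠ 0, TΨ ≠ 0
  have hone : (lp.single 2 0 1 : L2) ≠ 0 := by
    intro h
    have := congrFun (congrArg (fun f : L2 => (f : ℕ → ℂ)) h) 0
    simp [lp.single_apply] at this
  haveI : Nontrivial L2 := ⟨lp.single 2 0 1, 0, hone⟩
  have hid : (ContinuousLinearMap.id ℂ L2) ≠ 0 := by
    intro h
    have := congrFun (congrArg (fun f : L2 →L[ℂ] L2 => (f : L2 → L2)) h) (lp.single 2 0 1)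
    simp at this
    exact hone this
  have hGinv_ne : Ginv ≠ 0 := by
    intro h; rw [h] at hGinv1; simp at hGinv1; exact hid hGinv1.symm
  have hGinv_pos : 0 < ‖Ginv‖ := norm_pos_iff.mpr hGinv_ne
  have hTΦ_ne : TΦ ≠ 0 := by
    intro h
    apply hid
    rw [← hGinv2, hG, h, map_zero]
    simp
  have hTΨ_ne : TΨ ≠ 0 := by
    intro h
    apply hid
    rw [← hGinv2, hG, h]
    simp
  have hTΦ_pos : 0 < ‖TΦ‖ := norm_pos_iff.mpr hTΦ_ne
  have hTΨ_pos : 0 < ‖TΨ‖ := norm_pos_iff.mpr hTΨ_ne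
  have hBΦ0 : 0 ≤ BΦ := by
    by_contra h
    push_neg at h
    rw [Real.sqrt_eq_zero_of_nonpos h.le] at hBΦ
    linarith
  have hBΨ0 : 0 ≤ BΨ := by
    by_contra h
    push_neg at h
    rw [Real.sqrt_eq_zero_of_nonpos h.le] at hBΨ
    linarith
  have hsqrt : Real.sqrt (BΦ * BΨ) = Real.sqrt BΦ * Real.sqrt BΨ :=
    Real.sqrt_mul hBΦ0 _
  have hsqrtΦ : 0 < Real.sqrt BΦ := lt_of_lt_of_le hTΦ_pos hBΦ
  have hsqrtΨ : 0 < Real.sqrt BΨ := lt_of_lt_of_le hTΨ_pos hBΨ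
  -- key norm estimate
  have hdiff : ‖G - G'‖ < ‖Ginv‖⁻¹ := by
    have hGG' : G - G' = adjoint TΦ ∘L (U - V) ∘L TΨ := by
      ext x; simp [hG, hG', sub_comp, comp_sub]
    have h1 : ‖G - G'‖ ≤ ‖TΦ‖ * ‖U - V‖ * ‖TΨ‖ := by
      rw [hGG']
      calc ‖adjoint TΦ ∘L (U - V) ∘L TΨ‖
          ≤ ‖adjoint TΦ‖ * ‖(U - V) ∘L TΨ‖ := opNorm_comp_le _ _
        _ ≤ ‖adjoint TΦ‖ * (‖U - V‖ * ‖TΨ‖) :=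
            mul_le_mul_of_nonneg_left (opNorm_comp_le _ _) (norm_nonneg _)
        _ = ‖TΦ‖ * ‖U - V‖ * ‖TΨ‖ := by
            rw [LinearIsometryEquiv.norm_map adjoint TΦ]; ring
    have h2 : ‖TΦ‖ * ‖U - V‖ * ‖TΨ‖ < ‖Ginv‖⁻¹ := by
      rcases eq_or_lt_of_le (norm_nonneg (U - V)) with h0 | h0
      · rw [← h0]
        simp
        positivity
      · calc ‖TΦ‖ * ‖U - V‖ * ‖TΨ‖
            ≤ Real.sqrt BΦ * ‖U - V‖ * Real.sqrt BΨ := by gcongr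
          _ < Real.sqrt BΦ * (1 / (‖Ginv‖ * Real.sqrt (BΦ * BΨ))) * Real.sqrt BΨ := by
              gcongr
          _ = ‖Ginv‖⁻¹ := by
              rw [hsqrt]; field_simp
    exact lt_of_le_of_lt h1 h2
  -- G as a unit
  let u : (L2 →L[ℂ] L2)ˣ :=
    ⟨G, Ginv, hGinv1, hGinv2⟩
  have hcoe : (↑u⁻¹ : L2 →L[ℂ] L2) = Ginv := rfl
  have hnear : ‖G' - ↑u‖ < ‖(↑u⁻¹ : L2 →L[ℂ] L2)‖⁻¹ := by
    rw [hcoe, ← norm_neg]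
    simpa using hdiff
  let v := Units.ofNearby u G' hnear
  have hv : (↑v : L2 →L[ℂ] L2) = G' := rfl
  refine ⟨↑v⁻¹, ?_, ?_⟩
  · have := v.mul_inv
    rwa [hv] at this
  · have := v.inv_mul
    rwa [hv] at this
end
end
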